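/- arXiv:1008.2014 — 4 statements merged into one kernel-verified Lean document; each statement's English description precedes it below -/
import Mathlib

section
/- For every finite nonempty set X and all elements a, b, c, d of R(X,2), binary intermolecular recombination satisfies the identity ⟦⟦⟦a,b⟧,c⟧,d⟧ − ⟦⟦⟦a,c⟧,b⟧,d⟧ − ⟦⟦⟦b,c⟧,d⟧,a⟧ − ⟦⟦⟦b,d⟧,a⟧,c⟧ + ⟦⟦⟦b,d⟧,c⟧,a⟧ + ⟦⟦a,b⟧,⟦c,d⟧⟧ = 0. -/
open scoped BigOperators

/-- The tensor-like product of finitely supported functions. -/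
noncomputable def tensorPi {n : ℕ} {B : Type*} (f : Fin n → (B →₀ ℚ)) :
    (Fin n → B) →₀ ℚ :=
  haveI := Classical.decEq B
  Finsupp.onFinset (Fintype.piFinset fun j => (f j).support)
    (fun w => ∏ j, f j (w j))
    (fun w hw => by
      rw [Fintype.mem_piFinset]
      intro j
      rw [Finsupp.mem_support_iff]
      intro h0
      exact hw (Finset.prod_eq_zero (Finset.mem_univ j) h0))

/-- `R(X,n)`: the vector space over `ℚ` with basis the set `(X*)^n` of `n`-tuples of elements
of the free semigroup `X*` on `X`. -/
abbrev RXn (X : Type*) (n : ℕ) : Type _ := (Fin n → FreeSemigroup X) →₀ ℚ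

/-- `n`-ary intermolecular recombination: the `ℚ`-multilinear extension of
`⟦a_1,…,a_n⟧ = Σ_{σ ∈ S_n} (a_{σ(1),1}, a_{σ(2),2}, …, a_{σ(n),n})` on basis elements. -/
noncomputable def recomb {X : Type*} {n : ℕ} (a : Fin n → RXn X n) : RXn X n :=
  ∑ σ : Equiv.Perm (Fin n),
    tensorPi fun j => Finsupp.mapDomain (fun w => w j) (a (σ j))

/-- Binary intermolecular recombination `⟦a,b⟧` on `R(X,2)`. -/
noncomputable def op2 {X : Type*} (a b : RXn X 2) : RXn X 2 :=
  recomb ![a, b]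

section Aux
variable {B : Type*}

lemma tensorPi_apply (f : Fin 2 → (B →₀ ℚ)) (w : Fin 2 → B) :
    tensorPi f w = f 0 (w 0) * f 1 (w 1) := by
  simp [tensorPi, Fin.prod_univ_two]

/-- total coefficient sum -/
noncomputable def S (x : B →₀ ℚ) : ℚ := x.sum fun _ c => c

lemma S_add (x y : B →₀ ℚ) : S (x + y) = S x + S y := by
  simp [S, Finsupp.sum_add_index']

lemma S_single (u : B) (c : ℚ) : S (Finsupp.single u c) = c := by
  simp [S, Finsupp.sum_single_index]

lemma S_mapDomain {C : Type*} (g : B → C) (x : B →₀ ℚ) :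
    S (Finsupp.mapDomain g x) = S x := by
  simp [S, Finsupp.sum_mapDomain_index]

lemma tensorPi_eq_sum (x y : B →₀ ℚ) :
    tensorPi ![x, y] = x.sum fun u cu => y.sum fun v cv => Finsupp.single ![u, v] (cu * cv) := by
  classical
  ext w
  rw [tensorPi_apply]
  rw [Finsupp.sum_apply]
  simp only [Finsupp.sum_apply, Finsupp.single_apply]
  have key : ∀ (u v : B), (![u, v] = w) ↔ (u = w 0 ∧ v = w 1) := by
    intro u v
    constructor
    · intro h; constructor <;> rw [← h] <;> simp
    · rintro ⟨h1, h2⟩; funext j; fin_cases j <;> simpa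
  simp only [key, Matrix.cons_val_zero, Matrix.cons_val_one, Matrix.head_cons]
  rw [Finsupp.sum]
  rw [Finset.sum_eq_single (w 0)]
  · rw [Finsupp.sum, Finset.sum_eq_single (w 1)]
    · simp
    · intro v _ hv; simp [hv]
    · intro h; simp [Finsupp.notMem_support_iff.mp h]
  · intro u _ hu
    rw [Finsupp.sum]
    apply Finset.sum_eq_zero
    intro v _
    simp [hu]
  · intro h
    rw [Finsupp.sum]
    apply Finset.sum_eq_zero
    intro v _
    simp [Finsupp.notMem_support_iff.mp h]

lemma mapDomain_finsupp_sum {C ι : Type*} (g : B → C) (x : ι →₀ ℚ)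
    (F : ι → ℚ → (B →₀ ℚ)) :
    Finsupp.mapDomain g (x.sum F) = x.sum fun i r => Finsupp.mapDomain g (F i r) :=
  map_finsuppSum (Finsupp.mapDomain.addMonoidHom g) x F

lemma S_tensorPi (x y : B →₀ ℚ) : S (tensorPi ![x, y]) = S x * S y := by
  classical
  rw [tensorPi_eq_sum, S, Finsupp.sum_sum_index (fun _ => rfl) (fun _ _ _ => rfl)]
  have h : ∀ (u : B) (cu : ℚ),
      ((y.sum fun v cv => Finsupp.single ![u, v] (cu * cv)).sum fun _ c => c) = cu * S y := by
    intro u cu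
    rw [Finsupp.sum_sum_index (fun _ => rfl) (fun _ _ _ => rfl)]
    refine Eq.trans (Finsupp.sum_congr fun v _ => Finsupp.sum_single_index rfl) ?_
    rw [S, Finsupp.sum, Finsupp.sum, Finset.mul_sum]
  rw [Finsupp.sum_congr (g2 := fun _ cu => cu * S y) fun u _ => h u _]
  simp only [S, Finsupp.sum]
  rw [← Finset.sum_mul]

lemma sum_single_smul (x : B →₀ ℚ) (r : ℚ) :
    (x.sum fun u cu => Finsupp.single u (cu * r)) = r • x := by
  classical
  conv_rhs => rw [← Finsupp.sum_single x, Finsupp.smul_sum]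
  refine Finsupp.sum_congr fun u _ => ?_
  rw [Finsupp.smul_single, smul_eq_mul, mul_comm]

lemma mapDomain_tensorPi_zero (x y : B →₀ ℚ) :
    Finsupp.mapDomain (fun w : Fin 2 → B => w 0) (tensorPi ![x, y]) = S y • x := by
  classical
  rw [tensorPi_eq_sum, mapDomain_finsupp_sum]
  have h1 : ∀ (u : B) (cu : ℚ),
      (Finsupp.mapDomain (fun w : Fin 2 → B => w 0)
        (y.sum fun v cv => Finsupp.single ![u, v] (cu * cv)))
      = Finsupp.single u (cu * S y) := by
    intro u cu
    rw [mapDomain_finsupp_sum]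
    simp only [Finsupp.mapDomain_single, Matrix.cons_val_zero]
    rw [S, Finsupp.sum, Finsupp.sum, Finset.mul_sum, Finsupp.single_finset_sum]
  rw [Finsupp.sum_congr (g2 := fun u cu => Finsupp.single u (cu * S y)) fun u _ => h1 u _]
  exact sum_single_smul x (S y)

lemma mapDomain_tensorPi_one (x y : B →₀ ℚ) :
    Finsupp.mapDomain (fun w : Fin 2 → B => w 1) (tensorPi ![x, y]) = S x • y := by
  classical
  rw [tensorPi_eq_sum, mapDomain_finsupp_sum]
  have h1 : ∀ (u : B) (cu : ℚ),
      (Finsupp.mapDomain (fun w : Fin 2 → B => w 1)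
        (y.sum fun v cv => Finsupp.single ![u, v] (cu * cv)))
      = cu • y := by
    intro u cu
    rw [mapDomain_finsupp_sum]
    simp only [Finsupp.mapDomain_single, Matrix.cons_val_one, Matrix.head_cons]
    rw [← sum_single_smul (x := y) (r := cu)]
    exact Finsupp.sum_congr fun v _ => by rw [mul_comm]; rfl
  rw [Finsupp.sum_congr (g2 := fun _ cu => cu • y) fun u _ => h1 u _]
  rw [Finsupp.sum, ← Finset.sum_smul]
  rw [S, Finsupp.sum]

/-- projections -/
noncomputable def P0 (x : (Fin 2 → B) →₀ ℚ) : B →₀ ℚ :=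
  Finsupp.mapDomain (fun w => w 0) x

noncomputable def P1 (x : (Fin 2 → B) →₀ ℚ) : B →₀ ℚ :=
  Finsupp.mapDomain (fun w => w 1) x

lemma P0_add (p q : (Fin 2 → B) →₀ ℚ) : P0 (p + q) = P0 p + P0 q :=
  Finsupp.mapDomain_add

lemma P1_add (p q : (Fin 2 → B) →₀ ℚ) : P1 (p + q) = P1 p + P1 q :=
  Finsupp.mapDomain_add

lemma S_P0 (x : (Fin 2 → B) →₀ ℚ) : S (P0 x) = S x := S_mapDomain _ _

lemma S_P1 (x : (Fin 2 → B) →₀ ℚ) : S (P1 x) = S x := S_mapDomain _ _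

lemma P0_tensorPi (x y : B →₀ ℚ) : P0 (tensorPi ![x, y]) = S y • x :=
  mapDomain_tensorPi_zero x y

lemma P1_tensorPi (x y : B →₀ ℚ) : P1 (tensorPi ![x, y]) = S x • y :=
  mapDomain_tensorPi_one x y

end Aux

section Op2
variable {X : Type*}

lemma perm_fin_two_univ :
    (Finset.univ : Finset (Equiv.Perm (Fin 2))) = {1, Equiv.swap 0 1} := by
  decide

lemma op2_eq (a b : RXn X 2) :
    op2 a b = tensorPi ![P0 a, P1 b] + tensorPi ![P0 b, P1 a] := by
  have h1 : (fun j => Finsupp.mapDomain (fun w => w j)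
        ((![a, b] : Fin 2 → RXn X 2) ((1 : Equiv.Perm (Fin 2)) j))) = ![P0 a, P1 b] := by
    funext j; fin_cases j <;> simp [P0, P1]
  have h2 : (fun j => Finsupp.mapDomain (fun w => w j)
        ((![a, b] : Fin 2 → RXn X 2) ((Equiv.swap 0 1 : Equiv.Perm (Fin 2)) j)))
      = ![P0 b, P1 a] := by
    funext j; fin_cases j <;>
      simp [P0, P1, Equiv.swap_apply_left, Equiv.swap_apply_right]
  unfold op2 recomb
  rw [perm_fin_two_univ, Finset.sum_insert (by decide), Finset.sum_singleton, h1, h2]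

lemma op2_apply (a b : RXn X 2) (w : Fin 2 → FreeSemigroup X) :
    op2 a b w = P0 a (w 0) * P1 b (w 1) + P0 b (w 0) * P1 a (w 1) := by
  rw [op2_eq, Finsupp.add_apply, tensorPi_apply, tensorPi_apply]
  simp

lemma S_op2 (a b : RXn X 2) : S (op2 a b) = S a * S b + S b * S a := by
  rw [op2_eq, S_add, S_tensorPi, S_tensorPi, S_P0, S_P0, S_P1, S_P1]

lemma P0_op2 (a b : RXn X 2) : P0 (op2 a b) = S b • P0 a + S a • P0 b := by
  rw [op2_eq, P0_add, P0_tensorPi, P0_tensorPi, S_P1, S_P1]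

lemma P1_op2 (a b : RXn X 2) : P1 (op2 a b) = S a • P1 b + S b • P1 a := by
  rw [op2_eq, P1_add, P1_tensorPi, P1_tensorPi, S_P0, S_P0]

end Op2

/-- binary intermolecular recombination satisfies the identity
`⟦⟦⟦a,b⟧,c⟧,d⟧ − ⟦⟦⟦a,c⟧,b⟧,d⟧ − ⟦⟦⟦b,c⟧,d⟧,a⟧ − ⟦⟦⟦b,d⟧,a⟧,c⟧ + ⟦⟦⟦b,d⟧,c⟧,a⟧
  + ⟦⟦a,b⟧,⟦c,d⟧⟧ = 0`. -/
theorem binary_reduced_identity {X : Type*} [Fintype X] [Nonempty X]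
    (a b c d : RXn X 2) :
    op2 (op2 (op2 a b) c) d
      - op2 (op2 (op2 a c) b) d
      - op2 (op2 (op2 b c) d) a
      - op2 (op2 (op2 b d) a) c
      + op2 (op2 (op2 b d) c) a
      + op2 (op2 a b) (op2 c d) = 0 := by
  ext w
  simp only [Finsupp.coe_add, Finsupp.coe_sub, Pi.add_apply, Pi.sub_apply,
    Finsupp.coe_zero, Pi.zero_apply, op2_apply, P0_op2, P1_op2, S_op2,
    Finsupp.add_apply, Finsupp.smul_apply, smul_eq_mul]
  ring
end

section
/- Fix a finite nonempty set X. The ℚ-vector space of coefficient vectors (c_1,…,c_15) ∈ ℚ^15 such that the linear combination of the 15 degree-4 multilinear binary monomials with these coefficients vanishes for all a, b, c, d ∈ R(X,2) (i.e., the space of multilinear degree-4 identities of binary intermolecular recombination) has dimension exactly 9; equivalently, the span of the 15 corresponding multilinear maps R(X,2)^4 → R(X,2) has dimension 6. -/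
open scoped BigOperators

/-- The 15 degree-4 multilinear monomials for a commutative binary operation, in the order
of the paper: 12 monomials `⟦⟦⟦x,y⟧,z⟧,w⟧` followed by the 3 monomials `⟦⟦x,y⟧,⟦z,w⟧⟧`. -/
noncomputable def mons4 {X : Type*} :
    Fin 15 → (RXn X 2 → RXn X 2 → RXn X 2 → RXn X 2 → RXn X 2) :=
  ![fun a b c d => op2 (op2 (op2 a b) c) d,
    fun a b c d => op2 (op2 (op2 a b) d) c,
    fun a b c d => op2 (op2 (op2 a c) b) d,
    fun a b c d => op2 (op2 (op2 a c) d) b,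
    fun a b c d => op2 (op2 (op2 a d) b) c,
    fun a b c d => op2 (op2 (op2 a d) c) b,
    fun a b c d => op2 (op2 (op2 b c) a) d,
    fun a b c d => op2 (op2 (op2 b c) d) a,
    fun a b c d => op2 (op2 (op2 b d) a) c,
    fun a b c d => op2 (op2 (op2 b d) c) a,
    fun a b c d => op2 (op2 (op2 c d) a) b,
    fun a b c d => op2 (op2 (op2 c d) b) a,
    fun a b c d => op2 (op2 a b) (op2 c d),
    fun a b c d => op2 (op2 a c) (op2 b d),
    fun a b c d => op2 (op2 a d) (op2 b c)]


namespace D4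

variable {X : Type*}

noncomputable def t2 (f g : FreeSemigroup X →₀ ℚ) : RXn X 2 := tensorPi ![f, g]

noncomputable def p0 (a : RXn X 2) : FreeSemigroup X →₀ ℚ :=
  Finsupp.mapDomain (fun w => w 0) a
noncomputable def p1 (a : RXn X 2) : FreeSemigroup X →₀ ℚ :=
  Finsupp.mapDomain (fun w => w 1) a

def tot {α : Type*} (f : α →₀ ℚ) : ℚ := f.sum fun _ r => r

lemma t2_apply (f g : FreeSemigroup X →₀ ℚ) (w : Fin 2 → FreeSemigroup X) :
    t2 f g w = f (w 0) * g (w 1) := by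
  simp [t2, tensorPi, Fin.prod_univ_two]

lemma vec2_eq_iff {α : Type*} (x y : α) (w : Fin 2 → α) :
    ![x, y] = w ↔ x = w 0 ∧ y = w 1 := by
  constructor
  · rintro rfl; simp
  · rintro ⟨rfl, rfl⟩
    funext i
    fin_cases i <;> simp

lemma t2_add_left (f f' g : FreeSemigroup X →₀ ℚ) :
    t2 (f + f') g = t2 f g + t2 f' g := by
  ext w; simp [t2_apply, add_mul]

lemma t2_add_right (f g g' : FreeSemigroup X →₀ ℚ) :
    t2 f (g + g') = t2 f g + t2 f g' := by
  ext w; simp [t2_apply, mul_add]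

lemma t2_smul_left (r : ℚ) (f g : FreeSemigroup X →₀ ℚ) :
    t2 (r • f) g = r • t2 f g := by
  ext w; simp [t2_apply]; ring

lemma t2_smul_right (r : ℚ) (f g : FreeSemigroup X →₀ ℚ) :
    t2 f (r • g) = r • t2 f g := by
  ext w; simp [t2_apply]; ring

@[simp] lemma t2_zero_left (g : FreeSemigroup X →₀ ℚ) : t2 0 g = 0 := by
  ext w; simp [t2_apply]

@[simp] lemma t2_zero_right (f : FreeSemigroup X →₀ ℚ) : t2 f 0 = 0 := by
  ext w; simp [t2_apply]

lemma t2_single (y z : FreeSemigroup X) (r s : ℚ) :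
    t2 (Finsupp.single y r) (Finsupp.single z s)
      = Finsupp.single ![y, z] (r * s) := by
  ext w
  classical
  simp only [t2_apply, Finsupp.single_apply, vec2_eq_iff]
  split_ifs with h1 h2 h3 <;> simp_all

@[simp] lemma tot_zero {α : Type*} : tot (0 : α →₀ ℚ) = 0 := by simp [tot]

@[simp] lemma tot_single {α : Type*} (a : α) (r : ℚ) :
    tot (Finsupp.single a r) = r := by
  classical
  simp [tot, Finsupp.sum_single_index]

@[simp] lemma tot_add {α : Type*} (f g : α →₀ ℚ) : tot (f + g) = tot f + tot g := by
  classical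
  simp [tot, Finsupp.sum_add_index]

@[simp] lemma tot_smul {α : Type*} (r : ℚ) (f : α →₀ ℚ) : tot (r • f) = r * tot f := by
  classical
  simp [tot, Finsupp.sum_smul_index, Finsupp.mul_sum]

@[simp] lemma p0_zero : p0 (0 : RXn X 2) = 0 := Finsupp.mapDomain_zero
@[simp] lemma p1_zero : p1 (0 : RXn X 2) = 0 := Finsupp.mapDomain_zero
@[simp] lemma p0_add (a b : RXn X 2) : p0 (a + b) = p0 a + p0 b := Finsupp.mapDomain_add
@[simp] lemma p1_add (a b : RXn X 2) : p1 (a + b) = p1 a + p1 b := Finsupp.mapDomain_add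
@[simp] lemma p0_smul (r : ℚ) (a : RXn X 2) : p0 (r • a) = r • p0 a :=
  Finsupp.mapDomain_smul r a
@[simp] lemma p1_smul (r : ℚ) (a : RXn X 2) : p1 (r • a) = r • p1 a :=
  Finsupp.mapDomain_smul r a
@[simp] lemma p0_single (w : Fin 2 → FreeSemigroup X) (r : ℚ) :
    p0 (Finsupp.single w r) = Finsupp.single (w 0) r := Finsupp.mapDomain_single
@[simp] lemma p1_single (w : Fin 2 → FreeSemigroup X) (r : ℚ) :
    p1 (Finsupp.single w r) = Finsupp.single (w 1) r := Finsupp.mapDomain_single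

@[simp] lemma tot_p0 (a : RXn X 2) : tot (p0 a) = tot a := by
  classical
  unfold tot p0
  rw [Finsupp.sum_mapDomain_index] <;> simp

@[simp] lemma tot_p1 (a : RXn X 2) : tot (p1 a) = tot a := by
  classical
  unfold tot p1
  rw [Finsupp.sum_mapDomain_index] <;> simp

lemma p0_t2 (f g : FreeSemigroup X →₀ ℚ) : p0 (t2 f g) = tot g • f := by
  classical
  induction f using Finsupp.induction_linear with
  | zero => simp
  | add f f' hf hf' => simp [t2_add_left, hf, hf', smul_add]
  | single y r =>
    induction g using Finsupp.induction_linear with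
    | zero => simp
    | add g g' hg hg' => simp [t2_add_right, hg, hg', add_smul]
    | single z s =>
      rw [t2_single, p0_single, tot_single, Finsupp.smul_single, smul_eq_mul, mul_comm]; simp

lemma p1_t2 (f g : FreeSemigroup X →₀ ℚ) : p1 (t2 f g) = tot f • g := by
  classical
  induction f using Finsupp.induction_linear with
  | zero => simp
  | add f f' hf hf' => simp [t2_add_left, hf, hf', add_smul]
  | single y r =>
    induction g using Finsupp.induction_linear with
    | zero => simp
    | add g g' hg hg' => simp [t2_add_right, hg, hg', smul_add]
    | single z s =>
      rw [t2_single, p1_single, tot_single, Finsupp.smul_single, smul_eq_mul]; simp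

lemma tot_t2 (f g : FreeSemigroup X →₀ ℚ) : tot (t2 f g) = tot f * tot g := by
  classical
  induction f using Finsupp.induction_linear with
  | zero => simp
  | add f f' hf hf' => simp [t2_add_left, hf, hf', add_mul]
  | single y r =>
    induction g using Finsupp.induction_linear with
    | zero => simp
    | add g g' hg hg' => simp [t2_add_right, hg, hg', mul_add]
    | single z s => rw [t2_single, tot_single, tot_single, tot_single]

lemma op2_eq (a b : RXn X 2) :
    op2 a b = t2 (p0 a) (p1 b) + t2 (p0 b) (p1 a) := by
  classical
  have huniv : (Finset.univ : Finset (Equiv.Perm (Fin 2)))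
      = {Equiv.refl _, Equiv.swap 0 1} := by decide
  have h1 : (fun j => Finsupp.mapDomain (fun w => w j) (![a, b] ((Equiv.refl (Fin 2)) j)))
      = ![p0 a, p1 b] := by
    funext j; fin_cases j <;> simp [p0, p1]
  have h2 : (fun j => Finsupp.mapDomain (fun w => w j) (![a, b] ((Equiv.swap (0:Fin 2) 1) j)))
      = ![p0 b, p1 a] := by
    funext j
    fin_cases j <;>
      simp [p0, p1, Equiv.swap_apply_left, Equiv.swap_apply_right]
  unfold op2 recomb
  rw [huniv, Finset.sum_insert (by decide), Finset.sum_singleton, h1, h2]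
  rfl

/-- words of pairwise distinct lengths in the free semigroup -/
def wrd (x0 : X) : ℕ → FreeSemigroup X
  | 0 => FreeSemigroup.of x0
  | n + 1 => FreeSemigroup.of x0 * wrd x0 n

lemma wrd_length (x0 : X) (n : ℕ) : (wrd x0 n).length = n + 1 := by
  induction n with
  | zero => simp [wrd]
  | succ n ih => simp [wrd, FreeSemigroup.length_mul, ih]; omega

@[simp] lemma wrd_eq_iff (x0 : X) (m n : ℕ) : wrd x0 m = wrd x0 n ↔ m = n := by
  constructor
  · intro h
    have := congrArg FreeSemigroup.length h
    rw [wrd_length, wrd_length] at this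
    omega
  · rintro rfl; rfl

@[simp] lemma wrd_pair_eq_iff (x0 : X) (i j k l : ℕ) :
    (![wrd x0 i, wrd x0 j] = ![wrd x0 k, wrd x0 l]) ↔ (i = k ∧ j = l) := by
  rw [vec2_eq_iff]; simp

end D4

set_option maxHeartbeats 1600000000 in
/-- the space of coefficient vectors in `ℚ^15` whose corresponding linear
combination of the 15 degree-4 multilinear binary monomials vanishes identically on
`R(X,2)` has dimension exactly 9; equivalently, the span of the 15 corresponding
multilinear maps has dimension 6. -/
theorem degree4_identity_space_dimension {X : Type*} [Fintype X] [Nonempty X] :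
    Module.finrank ℚ
        (LinearMap.ker (Fintype.linearCombination ℚ (mons4 (X := X)))) = 9 ∧
      Module.finrank ℚ
        (LinearMap.range (Fintype.linearCombination ℚ (mons4 (X := X)))) = 6 := by
  classical
  set L := Fintype.linearCombination ℚ (mons4 (X := X)) with hL
  have kerP : ∀ v : Fin 15 → ℚ, (∀ a b c d : RXn X 2,
      ∑ i, v i • mons4 i a b c d = 0) → v ∈ LinearMap.ker L := by
    intro v hv
    rw [LinearMap.mem_ker, hL, Fintype.linearCombination_apply]
    funext a b c d
    have := hv a b c d
    simpa [Finset.sum_apply, Pi.smul_apply] using this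
  have hk0 : ((![-1,1,1,-1,-1,1,0,0,0,0,0,0,0,0,0] : Fin 15 → ℚ)) ∈ LinearMap.ker L := kerP _ (by
    intro a b c d
    simp only [Fin.sum_univ_succ, Finset.univ_eq_empty, Finset.sum_empty, mons4,
      Matrix.cons_val_zero, Matrix.cons_val_succ]
    simp only [D4.op2_eq, D4.p0_add, D4.p1_add, D4.p0_smul, D4.p1_smul, D4.p0_t2, D4.p1_t2,
      D4.tot_add, D4.tot_smul, D4.tot_t2, D4.tot_p0, D4.tot_p1,
      D4.t2_add_left, D4.t2_add_right, D4.t2_smul_left, D4.t2_smul_right, smul_smul]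
    module)
  have hk1 : ((![3,-3,1,-1,2,0,-3,1,0,0,0,0,0,0,0] : Fin 15 → ℚ)) ∈ LinearMap.ker L := kerP _ (by
    intro a b c d
    simp only [Fin.sum_univ_succ, Finset.univ_eq_empty, Finset.sum_empty, mons4,
      Matrix.cons_val_zero, Matrix.cons_val_succ]
    simp only [D4.op2_eq, D4.p0_add, D4.p1_add, D4.p0_smul, D4.p1_smul, D4.p0_t2, D4.p1_t2,
      D4.tot_add, D4.tot_smul, D4.tot_t2, D4.tot_p0, D4.tot_p1,
      D4.t2_add_left, D4.t2_add_right, D4.t2_smul_left, D4.t2_smul_right, smul_smul]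
    module)
  have hk2 : ((![3,-3,-1,0,1,0,-1,0,1,0,0,0,0,0,0] : Fin 15 → ℚ)) ∈ LinearMap.ker L := kerP _ (by
    intro a b c d
    simp only [Fin.sum_univ_succ, Finset.univ_eq_empty, Finset.sum_empty, mons4,
      Matrix.cons_val_zero, Matrix.cons_val_succ]
    simp only [D4.op2_eq, D4.p0_add, D4.p1_add, D4.p0_smul, D4.p1_smul, D4.p0_t2, D4.p1_t2,
      D4.tot_add, D4.tot_smul, D4.tot_t2, D4.tot_p0, D4.tot_p1,
      D4.t2_add_left, D4.t2_add_right, D4.t2_smul_left, D4.t2_smul_right, smul_smul]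
    module)
  have hk3 : ((![5,-5,0,-1,3,0,-3,0,0,1,0,0,0,0,0] : Fin 15 → ℚ)) ∈ LinearMap.ker L := kerP _ (by
    intro a b c d
    simp only [Fin.sum_univ_succ, Finset.univ_eq_empty, Finset.sum_empty, mons4,
      Matrix.cons_val_zero, Matrix.cons_val_succ]
    simp only [D4.op2_eq, D4.p0_add, D4.p1_add, D4.p0_smul, D4.p1_smul, D4.p0_t2, D4.p1_t2,
      D4.tot_add, D4.tot_smul, D4.tot_t2, D4.tot_p0, D4.tot_p1,
      D4.t2_add_left, D4.t2_add_right, D4.t2_smul_left, D4.t2_smul_right, smul_smul]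
    module)
  have hk4 : ((![0,-1,2,-2,1,0,-1,0,0,0,1,0,0,0,0] : Fin 15 → ℚ)) ∈ LinearMap.ker L := kerP _ (by
    intro a b c d
    simp only [Fin.sum_univ_succ, Finset.univ_eq_empty, Finset.sum_empty, mons4,
      Matrix.cons_val_zero, Matrix.cons_val_succ]
    simp only [D4.op2_eq, D4.p0_add, D4.p1_add, D4.p0_smul, D4.p1_smul, D4.p0_t2, D4.p1_t2,
      D4.tot_add, D4.tot_smul, D4.tot_t2, D4.tot_p0, D4.tot_p1,
      D4.t2_add_left, D4.t2_add_right, D4.t2_smul_left, D4.t2_smul_right, smul_smul]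
    module)
  have hk5 : ((![3,-4,2,-2,3,0,-3,0,0,0,0,1,0,0,0] : Fin 15 → ℚ)) ∈ LinearMap.ker L := kerP _ (by
    intro a b c d
    simp only [Fin.sum_univ_succ, Finset.univ_eq_empty, Finset.sum_empty, mons4,
      Matrix.cons_val_zero, Matrix.cons_val_succ]
    simp only [D4.op2_eq, D4.p0_add, D4.p1_add, D4.p0_smul, D4.p1_smul, D4.p0_t2, D4.p1_t2,
      D4.tot_add, D4.tot_smul, D4.tot_t2, D4.tot_p0, D4.tot_p1,
      D4.t2_add_left, D4.t2_add_right, D4.t2_smul_left, D4.t2_smul_right, smul_smul]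
    module)
  have hk6 : ((![2,-1,-1,0,0,0,-1,0,0,0,0,0,1,0,0] : Fin 15 → ℚ)) ∈ LinearMap.ker L := kerP _ (by
    intro a b c d
    simp only [Fin.sum_univ_succ, Finset.univ_eq_empty, Finset.sum_empty, mons4,
      Matrix.cons_val_zero, Matrix.cons_val_succ]
    simp only [D4.op2_eq, D4.p0_add, D4.p1_add, D4.p0_smul, D4.p1_smul, D4.p0_t2, D4.p1_t2,
      D4.tot_add, D4.tot_smul, D4.tot_t2, D4.tot_p0, D4.tot_p1,
      D4.t2_add_left, D4.t2_add_right, D4.t2_smul_left, D4.t2_smul_right, smul_smul]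
    module)
  have hk7 : ((![-1,0,2,-1,0,0,-1,0,0,0,0,0,0,1,0] : Fin 15 → ℚ)) ∈ LinearMap.ker L := kerP _ (by
    intro a b c d
    simp only [Fin.sum_univ_succ, Finset.univ_eq_empty, Finset.sum_empty, mons4,
      Matrix.cons_val_zero, Matrix.cons_val_succ]
    simp only [D4.op2_eq, D4.p0_add, D4.p1_add, D4.p0_smul, D4.p1_smul, D4.p0_t2, D4.p1_t2,
      D4.tot_add, D4.tot_smul, D4.tot_t2, D4.tot_p0, D4.tot_p1,
      D4.t2_add_left, D4.t2_add_right, D4.t2_smul_left, D4.t2_smul_right, smul_smul]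
    module)
  have hk8 : ((![2,-3,0,-1,2,0,-1,0,0,0,0,0,0,0,1] : Fin 15 → ℚ)) ∈ LinearMap.ker L := kerP _ (by
    intro a b c d
    simp only [Fin.sum_univ_succ, Finset.univ_eq_empty, Finset.sum_empty, mons4,
      Matrix.cons_val_zero, Matrix.cons_val_succ]
    simp only [D4.op2_eq, D4.p0_add, D4.p1_add, D4.p0_smul, D4.p1_smul, D4.p0_t2, D4.p1_t2,
      D4.tot_add, D4.tot_smul, D4.tot_t2, D4.tot_p0, D4.tot_p1,
      D4.t2_add_left, D4.t2_add_right, D4.t2_smul_left, D4.t2_smul_right, smul_smul]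
    module)
  -- the nine kernel elements are linearly independent
  set K : Fin 9 → (LinearMap.ker L) :=
    ![⟨_, hk0⟩, ⟨_, hk1⟩, ⟨_, hk2⟩, ⟨_, hk3⟩, ⟨_, hk4⟩, ⟨_, hk5⟩, ⟨_, hk6⟩, ⟨_, hk7⟩, ⟨_, hk8⟩]
    with hK
  have hKind : LinearIndependent ℚ K := by
    apply LinearIndependent.of_comp
      ((LinearMap.funLeft ℚ ℚ (![5,7,8,9,10,11,12,13,14] : Fin 9 → Fin 15)).comp
        (LinearMap.ker L).subtype)
    have he : (⇑((LinearMap.funLeft ℚ ℚ (![5,7,8,9,10,11,12,13,14] : Fin 9 → Fin 15)).comp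
        (LinearMap.ker L).subtype) ∘ K) = fun i => Pi.single i (1:ℚ) := by
      funext i j
      fin_cases i <;> fin_cases j <;> rfl
    rw [he]
    have h := (Pi.basisFun ℚ (Fin 9)).linearIndependent
    have e : ⇑(Pi.basisFun ℚ (Fin 9)) = fun i => Pi.single i (1:ℚ) := by
      funext i; exact Pi.basisFun_apply ℚ (Fin 9) i
    rwa [e] at h
  have h9 : 9 ≤ Module.finrank ℚ (LinearMap.ker L) := by
    simpa using hKind.fintype_card_le_finrank
  -- range elements
  have hm : ∀ j : Fin 15, mons4 (X := X) j ∈ LinearMap.range L := by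
    intro j
    refine ⟨Pi.single j 1, ?_⟩
    rw [hL, Fintype.linearCombination_apply]
    simp [Pi.single_apply, ite_smul]
  set F : Fin 6 → (LinearMap.range L) :=
    ![⟨mons4 0, hm 0⟩, ⟨mons4 1, hm 1⟩, ⟨mons4 2, hm 2⟩,
      ⟨mons4 3, hm 3⟩, ⟨mons4 4, hm 4⟩, ⟨mons4 6, hm 6⟩] with hF
  have hsub' : (⇑(LinearMap.range L).subtype ∘ F) =
      ![fun a b c d => op2 (op2 (op2 a b) c) d,
        fun a b c d => op2 (op2 (op2 a b) d) c,
        fun a b c d => op2 (op2 (op2 a c) b) d,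
        fun a b c d => op2 (op2 (op2 a c) d) b,
        fun a b c d => op2 (op2 (op2 a d) b) c,
        fun a b c d => op2 (op2 (op2 b c) a) d] := by
    funext k; fin_cases k <;> rfl
  have hFind : LinearIndependent ℚ F := by
    apply LinearIndependent.of_comp (LinearMap.range L).subtype
    rw [hsub']
    rw [Fintype.linearIndependent_iff]
    intro g h
    have hgv : g = ![g 0, g 1, g 2, g 3, g 4, g 5] := by
      funext i; fin_cases i <;> rfl
    rw [hgv] at h
    set x0 : X := Classical.arbitrary X with hx0
    have hv := congrFun (congrFun (congrFun (congrFun h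
      (Finsupp.single ![D4.wrd x0 0, D4.wrd x0 4] (1:ℚ)))
      (Finsupp.single ![D4.wrd x0 1, D4.wrd x0 5] (1:ℚ)))
      (Finsupp.single ![D4.wrd x0 2, D4.wrd x0 6] (1:ℚ)))
      (Finsupp.single ![D4.wrd x0 3, D4.wrd x0 7] (1:ℚ))
    simp only [Finset.sum_apply, Pi.smul_apply, Pi.zero_apply, Fin.sum_univ_succ,
      Finset.univ_eq_empty, Finset.sum_empty, add_zero,
      Matrix.cons_val_zero, Matrix.cons_val_succ] at hv
    simp only [D4.op2_eq, D4.p0_add, D4.p1_add, D4.p0_smul, D4.p1_smul,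
      D4.p0_single, D4.p1_single, D4.p0_t2, D4.p1_t2,
      D4.tot_add, D4.tot_smul, D4.tot_single, D4.tot_t2, D4.tot_p0, D4.tot_p1,
      D4.t2_add_left, D4.t2_add_right, D4.t2_smul_left, D4.t2_smul_right, D4.t2_single,
      smul_smul, Finsupp.smul_single, smul_eq_mul, mul_one, one_mul] at hv
    have eab := DFunLike.congr_fun hv ![D4.wrd x0 0, D4.wrd x0 5]
    have eac := DFunLike.congr_fun hv ![D4.wrd x0 0, D4.wrd x0 6]
    have ead := DFunLike.congr_fun hv ![D4.wrd x0 0, D4.wrd x0 7]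
    have ebc := DFunLike.congr_fun hv ![D4.wrd x0 1, D4.wrd x0 6]
    have ebd := DFunLike.congr_fun hv ![D4.wrd x0 1, D4.wrd x0 7]
    have ecd := DFunLike.congr_fun hv ![D4.wrd x0 2, D4.wrd x0 7]
    simp only [Finsupp.add_apply, Finsupp.smul_apply, Finsupp.single_apply,
      D4.wrd_pair_eq_iff, Finsupp.coe_zero, Pi.zero_apply,
      smul_eq_mul] at eab eac ead ebc ebd ecd
    norm_num at eab eac ead ebc ebd ecd
    have hg0 : g 0 = 0 := by linarith
    have hg1 : g 1 = 0 := by linarith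
    have hg2 : g 2 = 0 := by linarith
    have hg3 : g 3 = 0 := by linarith
    have hg4 : g 4 = 0 := by linarith
    have hg5 : g 5 = 0 := by linarith
    intro i
    fin_cases i
    · exact hg0
    · exact hg1
    · exact hg2
    · exact hg3
    · exact hg4
    · exact hg5
  haveI : Module.Finite ℚ (LinearMap.range L) := Module.Finite.range L
  have h6 : 6 ≤ Module.finrank ℚ (LinearMap.range L) := by
    simpa using hFind.fintype_card_le_finrank
  have hrn := LinearMap.finrank_range_add_finrank_ker L
  rw [Module.finrank_fintype_fun_eq_card, Fintype.card_fin] at hrn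
  constructor <;> omega
end

section
/- For every m × n matrix E over the integers ℤ, there exists a unique m × n integer matrix H in Hermite normal form such that UE = H for some m × m integer matrix U with det(U) = ±1. -/
/-- An `m × n` integer matrix `H` is in Hermite normal form with rank `r`:
there are pivot columns `j 0 < j 1 < ⋯ < j (r-1)` such that
(1) in each of the first `r` rows, all entries before the pivot vanish;
(2) each pivot entry is at least 1;
(3) the entries above a pivot are nonnegative and strictly smaller than the pivot;
(4) all rows after the first `r` are zero. -/
def IsHNFOfRank {m n : ℕ} (r : ℕ) (H : Matrix (Fin m) (Fin n) ℤ) : Prop :=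
  ∃ (hr : r ≤ m) (j : Fin r → Fin n),
    StrictMono j ∧
    (∀ (i : Fin r) (l : Fin n), l < j i → H (Fin.castLE hr i) l = 0) ∧
    (∀ i : Fin r, 1 ≤ H (Fin.castLE hr i) (j i)) ∧
    (∀ (i k : Fin r), k < i →
      0 ≤ H (Fin.castLE hr k) (j i) ∧ H (Fin.castLE hr k) (j i) < H (Fin.castLE hr i) (j i)) ∧
    (∀ (i : Fin m), r ≤ (i : ℕ) → ∀ l : Fin n, H i l = 0)

/-- An integer matrix is in Hermite normal form if it is in Hermite normal form
of some rank `r`. -/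
def IsHNF {m n : ℕ} (H : Matrix (Fin m) (Fin n) ℤ) : Prop :=
  ∃ r : ℕ, IsHNFOfRank r H



namespace HNFAux

/-- `Rel i0 A B`: `B = U * A` for a unimodular `U` supported on rows/columns `≥ i0`. -/
def Rel (i0 : ℕ) {m n : ℕ} (A B : Matrix (Fin m) (Fin n) ℤ) : Prop :=
  ∃ U : Matrix (Fin m) (Fin m) ℤ, (U.det = 1 ∨ U.det = -1) ∧
    (∀ i k : Fin m, (i : ℕ) < i0 ∨ (k : ℕ) < i0 → U i k = if i = k then 1 else 0) ∧
    U * A = B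

variable {m n : ℕ}

theorem Rel.refl (i0 : ℕ) (A : Matrix (Fin m) (Fin n) ℤ) : Rel i0 A A :=
  ⟨1, Or.inl Matrix.det_one, fun i k _ => Matrix.one_apply, Matrix.one_mul A⟩

theorem Rel.trans {i0 : ℕ} {A B C : Matrix (Fin m) (Fin n) ℤ}
    (h1 : Rel i0 A B) (h2 : Rel i0 B C) : Rel i0 A C := by
  obtain ⟨U, hU, hbU, hUA⟩ := h1
  obtain ⟨V, hV, hbV, hVB⟩ := h2
  refine ⟨V * U, ?_, ?_, by rw [Matrix.mul_assoc, hUA, hVB]⟩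
  · rw [Matrix.det_mul]
    rcases hU with h | h <;> rcases hV with h' | h' <;> simp [h, h'] <;> omega
  · intro i k hik
    rw [Matrix.mul_apply]
    rcases hik with hi | hk
    · rw [Finset.sum_eq_single i]
      · rw [hbV i i (Or.inl hi), hbU i k (Or.inl hi)]; simp
      · intro b _ hb; rw [hbV i b (Or.inl hi), if_neg (fun h => hb h.symm), zero_mul]
      · simp
    · rw [Finset.sum_eq_single k]
      · rw [hbU k k (Or.inr hk), hbV i k (Or.inr hk)]; simp
      · intro b _ hb; rw [hbU b k (Or.inr hk), if_neg hb, mul_zero]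
      · simp
    
theorem Rel.mono {i0 i1 : ℕ} (h01 : i0 ≤ i1) {A B : Matrix (Fin m) (Fin n) ℤ}
    (h : Rel i1 A B) : Rel i0 A B := by
  obtain ⟨U, hU, hb, hUA⟩ := h
  exact ⟨U, hU, fun i k hik => hb i k (by omega), hUA⟩

theorem Rel.fixed_rows {i0 : ℕ} {A B : Matrix (Fin m) (Fin n) ℤ} (h : Rel i0 A B)
    {i : Fin m} (hi : (i : ℕ) < i0) : B i = A i := by
  obtain ⟨U, _, hb, hUA⟩ := h
  funext l
  rw [← hUA, Matrix.mul_apply, Finset.sum_eq_single i]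
  · rw [hb i i (Or.inl hi)]; simp
  · intro b _ hbne; rw [hb i b (Or.inl hi), if_neg (fun h => hbne h.symm), zero_mul]
  · simp

/-- swap two rows at positions `≥ i0` -/
theorem rel_swap {i0 : ℕ} (a b : Fin m) (hab : a ≠ b) (ha : i0 ≤ (a : ℕ)) (hb : i0 ≤ (b : ℕ))
    (A : Matrix (Fin m) (Fin n) ℤ) :
    Rel i0 A (fun i => A (Equiv.swap a b i)) := by
  refine ⟨(Equiv.swap a b).toPEquiv.toMatrix, ?_, ?_, ?_⟩
  · right
    rw [Matrix.det_permutation, Equiv.Perm.sign_swap hab]; simp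
  · intro i k hik
    rw [PEquiv.toMatrix_apply, Equiv.toPEquiv_apply]
    simp only [Option.mem_def, Option.some_inj]
    rcases hik with hi | hk
    · have hfix : Equiv.swap a b i = i :=
        Equiv.swap_apply_of_ne_of_ne (by rintro rfl; omega) (by rintro rfl; omega)
      rw [hfix]
    · by_cases h : i = a
      · subst h
        rw [Equiv.swap_apply_left, if_neg (by rintro rfl; omega),
          if_neg (by rintro rfl; omega)]
      · by_cases h' : i = b
        · subst h'
          rw [Equiv.swap_apply_right, if_neg (by rintro rfl; omega),
            if_neg (by rintro rfl; omega)]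
        · rw [Equiv.swap_apply_of_ne_of_ne h h']
  · rw [PEquiv.toMatrix_toPEquiv_mul]
    rfl

/-- add `c` times row `b` to row `a`, both `≥ i0` -/
theorem rel_transvection {i0 : ℕ} (a b : Fin m) (hab : a ≠ b) (ha : i0 ≤ (a : ℕ))
    (hb : i0 ≤ (b : ℕ)) (c : ℤ) (A : Matrix (Fin m) (Fin n) ℤ) :
    Rel i0 A (Matrix.transvection a b c * A) := by
  refine ⟨Matrix.transvection a b c, Or.inl (Matrix.det_transvection_of_ne a b hab c), ?_, rfl⟩
  intro i k hik
  have hz : Matrix.single a b c i k = 0 := by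
    apply Matrix.single_apply_of_ne
    rintro ⟨rfl, rfl⟩; omega
  simp [Matrix.transvection, Matrix.add_apply, hz, Matrix.one_apply]

/-- negate row `a ≥ i0` -/
theorem rel_neg {i0 : ℕ} (a : Fin m) (ha : i0 ≤ (a : ℕ)) (A : Matrix (Fin m) (Fin n) ℤ) :
    Rel i0 A (fun i l => (if i = a then -1 else 1) * A i l) := by
  refine ⟨Matrix.diagonal (fun k => if k = a then -1 else 1), ?_, ?_, ?_⟩
  · right
    rw [Matrix.det_diagonal, Finset.prod_eq_single a] <;> simp +contextual
  · intro i k hik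
    rcases eq_or_ne i k with rfl | h
    · simp only [Matrix.diagonal_apply_eq, if_pos rfl]
      rw [if_neg (by rintro rfl; omega)]; simp
    · rw [Matrix.diagonal_apply_ne _ h, if_neg h]
  · funext i l
    rw [Matrix.diagonal_mul]

/-- entries of a transvection times a rectangular matrix -/
theorem transvection_mul_apply (a b : Fin m) (c : ℤ) (A : Matrix (Fin m) (Fin n) ℤ)
    (i : Fin m) (l : Fin n) :
    (Matrix.transvection a b c * A) i l = A i l + (if i = a then c * A b l else 0) := by
  rw [Matrix.transvection, Matrix.add_mul, Matrix.one_mul, Matrix.add_apply]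
  congr 1
  rw [Matrix.mul_apply]
  by_cases h : i = a
  · subst h
    rw [Finset.sum_eq_single b, if_pos rfl]
    · rw [Matrix.single_apply_same]
    · intro k _ hk
      rw [Matrix.single_apply_of_ne _ _ _ _ _ (by tauto), zero_mul]
    · simp
  · rw [if_neg h]
    apply Finset.sum_eq_zero
    intro k _
    rw [Matrix.single_apply_of_ne _ _ _ _ _ (by tauto), zero_mul]

end HNFAux

namespace HNFAux
variable {m n : ℕ}

/-- Clear the first column below row `i0`, producing a positive pivot at `(i0, 0)`. -/
theorem clear_col {i0 : ℕ} (hi0 : i0 < m) :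
    ∀ (N : ℕ) (E : Matrix (Fin m) (Fin (n + 1)) ℤ),
      (∑ i ∈ Finset.univ.filter (fun i : Fin m => i0 < (i : ℕ)), (E i 0).natAbs) ≤ N →
      (∃ i : Fin m, i0 ≤ (i : ℕ) ∧ E i 0 ≠ 0) →
      ∃ B, Rel i0 E B ∧ 1 ≤ B ⟨i0, hi0⟩ 0 ∧ (∀ i : Fin m, i0 < (i : ℕ) → B i 0 = 0) := by
  intro N
  induction N with
  | zero =>
    intro E hsum hex
    -- all entries strictly below i0 are zero
    have hz : ∀ i : Fin m, i0 < (i : ℕ) → E i 0 = 0 := by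
      intro i hi
      have : (E i 0).natAbs = 0 := by
        have := Finset.sum_eq_zero_iff.mp (Nat.le_zero.mp hsum) i
          (Finset.mem_filter.mpr ⟨Finset.mem_univ i, hi⟩)
        exact this
      omega
    obtain ⟨i, hi, hne⟩ := hex
    have hii : i = ⟨i0, hi0⟩ := by
      rcases Nat.lt_or_ge i0 (i : ℕ) with h | h
      · exact absurd (hz i h) hne
      · exact Fin.ext (show (i : ℕ) = i0 by omega)
    subst hii
    rcases Int.lt_or_lt_of_ne hne with hneg | hpos
    · refine ⟨_, rel_neg ⟨i0, hi0⟩ le_rfl E, ?_, ?_⟩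
      · rw [if_pos rfl, neg_one_mul]; omega
      · intro i hi
        rw [hz i hi, mul_zero]
    · exact ⟨E, Rel.refl i0 E, hpos, hz⟩
  | succ N ih =>
    intro E hsum hex
    by_cases hbel : ∃ i : Fin m, i0 < (i : ℕ) ∧ E i 0 ≠ 0
    · obtain ⟨i, hi, hb⟩ := hbel
      set i0' : Fin m := ⟨i0, hi0⟩ with hi0'
      have hne : i0' ≠ i := by intro h; rw [hi0'] at h; have := congrArg Fin.val h; simp at this; omega
      have hi0le : i0 ≤ (i0' : ℕ) := le_rfl
      have hile : i0 ≤ (i : ℕ) := le_of_lt hi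
      set a := E i0' 0 with ha
      set b := E i 0 with hb0
      set q := a / b with hq
      -- step 1: subtract q times row i from row i0'
      set E1 := Matrix.transvection i0' i (-q) * E with hE1
      have h1 : Rel i0 E E1 := rel_transvection i0' i hne hi0le hile (-q) E
      have hE1p : E1 i0' 0 = a % b := by
        rw [hE1, transvection_mul_apply, if_pos rfl, Int.emod_def, ← ha, ← hb0]; ring
      have hE1other : ∀ i' : Fin m, i' ≠ i0' → ∀ l, E1 i' l = E i' l := by
        intro i' hi' l
        rw [hE1, transvection_mul_apply, if_neg hi', add_zero]
      -- step 2: swap rows i0' and i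
      set E2 : Matrix (Fin m) (Fin (n+1)) ℤ := fun i' => E1 (Equiv.swap i0' i i') with hE2
      have h2 : Rel i0 E1 E2 := rel_swap i0' i hne hi0le hile E1
      have hE2p : E2 i0' 0 = b := by
        rw [hE2]; simp only [Equiv.swap_apply_left]
        rw [hE1other i hne.symm]
      have hE2i : E2 i 0 = a % b := by
        rw [hE2]; simp only [Equiv.swap_apply_right]; exact hE1p
      have hE2other : ∀ i' : Fin m, i' ≠ i0' → i' ≠ i → ∀ l, E2 i' l = E i' l := by
        intro i' h1' h2' l
        rw [hE2]; simp only [Equiv.swap_apply_of_ne_of_ne h1' h2']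
        exact hE1other i' h1' l
      -- measure decreases
      have hmodlt : (a % b).natAbs < b.natAbs := by
        have h0 : 0 ≤ a % b := Int.emod_nonneg a hb
        have h1' : a % b < |b| := Int.emod_lt_abs a hb
        rw [Int.abs_eq_natAbs] at h1'
        omega
      have hsum2 : (∑ i' ∈ Finset.univ.filter (fun i' : Fin m => i0 < (i' : ℕ)),
          (E2 i' 0).natAbs) ≤ N := by
        have hmem : i ∈ Finset.univ.filter (fun i' : Fin m => i0 < (i' : ℕ)) :=
          Finset.mem_filter.mpr ⟨Finset.mem_univ i, hi⟩
        rw [← Finset.sum_erase_add _ _ hmem] at hsum ⊢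
        have heq : ∀ i' ∈ (Finset.univ.filter (fun i' : Fin m => i0 < (i' : ℕ))).erase i,
            (E2 i' 0).natAbs = (E i' 0).natAbs := by
          intro i' hi'
          have h1' : i' ≠ i := Finset.ne_of_mem_erase hi'
          have h2' : i' ≠ i0' := by
            have := (Finset.mem_filter.mp (Finset.mem_of_mem_erase hi')).2
            intro h; rw [h] at this; simp [hi0'] at this
          rw [hE2other i' h2' h1']
        rw [Finset.sum_congr rfl heq, hE2i]
        rw [← hb0] at hsum
        omega
      have hex2 : ∃ i' : Fin m, i0 ≤ (i' : ℕ) ∧ E2 i' 0 ≠ 0 :=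
        ⟨i0', hi0le, by rw [hE2p]; exact hb⟩
      obtain ⟨B, hrel, hp, hz⟩ := ih E2 hsum2 hex2
      exact ⟨B, (h1.trans h2).trans hrel, hp, hz⟩
    · -- no nonzero entries strictly below: done as in base case
      push_neg at hbel
      obtain ⟨i, hi, hne⟩ := hex
      have hii : i = ⟨i0, hi0⟩ := by
        rcases Nat.lt_or_ge i0 (i : ℕ) with h | h
        · exact absurd (hbel i h) hne
        · exact Fin.ext (show (i : ℕ) = i0 by omega)
      subst hii
      rcases Int.lt_or_lt_of_ne hne with hneg | hpos
      · refine ⟨_, rel_neg ⟨i0, hi0⟩ le_rfl E, ?_, ?_⟩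
        · rw [if_pos rfl, neg_one_mul]; omega
        · intro i hi
          rw [hbel i hi, mul_zero]
      · exact ⟨E, Rel.refl i0 E, hpos, hbel⟩

end HNFAux

namespace HNFAux
variable {m n : ℕ}

/-- the row index `i0 + s` -/
def rowIdx {m i0 r : ℕ} (hr : i0 + r ≤ m) (s : Fin r) : Fin m :=
  ⟨i0 + (s : ℕ), by have := s.isLt; omega⟩

theorem mul_tail (U : Matrix (Fin m) (Fin m) ℤ) (A : Matrix (Fin m) (Fin (n + 1)) ℤ)
    (A' : Matrix (Fin m) (Fin n) ℤ) (h : ∀ i l, A' i l = A i (Fin.succ l))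
    (i : Fin m) (l : Fin n) :
    (U * A) i l.succ = (U * A') i l := by
  rw [Matrix.mul_apply, Matrix.mul_apply]
  exact Finset.sum_congr rfl fun k _ => by rw [h]

/-- Reduce the entries of row `i0` above the pivots of the rows `row s` (which all lie
strictly below `i0`). -/
theorem reduce_row {i0 : ℕ} (hi0 : i0 < m) {r : ℕ} (row : Fin r → Fin m)
    (hrow : ∀ s, i0 < (row s : ℕ)) (j : Fin r → Fin n) (hj : StrictMono j)
    (H : Matrix (Fin m) (Fin n) ℤ)
    (hzb : ∀ (s : Fin r) (l : Fin n), l < j s → H (row s) l = 0)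
    (hpv : ∀ s : Fin r, 1 ≤ H (row s) (j s)) :
    ∀ t : ℕ, t ≤ r →
      ∃ H', Rel i0 H H' ∧
        (∀ i : Fin m, i ≠ ⟨i0, hi0⟩ → ∀ l, H' i l = H i l) ∧
        (∀ l : Fin n, (∀ s, l < j s) → H' ⟨i0, hi0⟩ l = H ⟨i0, hi0⟩ l) ∧
        (∀ s : Fin r, (s : ℕ) < t →
          0 ≤ H' ⟨i0, hi0⟩ (j s) ∧ H' ⟨i0, hi0⟩ (j s) < H (row s) (j s)) := by
  intro t
  induction t with
  | zero =>
    intro _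
    exact ⟨H, Rel.refl i0 H, fun _ _ _ => rfl, fun _ _ => rfl, fun s hs => by omega⟩
  | succ t ih =>
    intro ht
    obtain ⟨H', hrel, hoth, hcols, hbnd⟩ := ih (by omega)
    set p : Fin m := ⟨i0, hi0⟩ with hp
    set st : Fin r := ⟨t, by omega⟩ with hst
    have hpne : p ≠ row st := by
      intro h
      have := hrow st
      rw [← h] at this
      simp [hp] at this
    have hrowst : ∀ l, H' (row st) l = H (row st) l := hoth (row st) (Ne.symm hpne)
    set g : ℤ := H (row st) (j st) with hg
    have hg1 : 1 ≤ g := hpv st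
    set q : ℤ := H' p (j st) / g with hq
    set H'' := Matrix.transvection p (row st) (-q) * H' with hH''
    have happ : ∀ i l, H'' i l = H' i l + (if i = p then -q * H' (row st) l else 0) :=
      fun i l => transvection_mul_apply p (row st) (-q) H' i l
    refine ⟨H'', hrel.trans (rel_transvection p (row st) hpne le_rfl (le_of_lt (hrow st)) (-q) H'),
      ?_, ?_, ?_⟩
    · intro i hi l
      rw [happ, if_neg hi, add_zero, hoth i hi]
    · intro l hl
      rw [happ, if_pos rfl, hrowst, hzb st l (hl st), mul_zero, add_zero, hcols l hl]
    · intro s hs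
      rcases Nat.lt_or_ge (s : ℕ) t with hlt | hge
      · -- earlier pivot: unchanged since row st vanishes there
        have hjlt : j s < j st := hj (by rw [hst]; exact hlt)
        rw [happ, if_pos rfl, hrowst, hzb st (j s) hjlt, mul_zero, add_zero]
        exact hbnd s hlt
      · have hsst : s = st := Fin.ext (show (s : ℕ) = t by omega)
        rw [hsst, happ, if_pos rfl, hrowst, ← hg]
        have heq : H' p (j st) + -q * g = H' p (j st) % g := by
          rw [Int.emod_def, hq]; ring
        rw [heq]
        exact ⟨Int.emod_nonneg _ (by omega), Int.emod_lt_of_pos _ (by omega)⟩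

end HNFAux

namespace HNFAux
variable {m : ℕ}

theorem exists_hnf_from :
    ∀ (n i0 : ℕ), i0 ≤ m → ∀ E : Matrix (Fin m) (Fin n) ℤ,
      ∃ (H : Matrix (Fin m) (Fin n) ℤ) (r : ℕ) (hr : i0 + r ≤ m) (j : Fin r → Fin n),
        Rel i0 E H ∧ StrictMono j ∧
        (∀ (s : Fin r) (l : Fin n), l < j s → H (rowIdx hr s) l = 0) ∧
        (∀ s : Fin r, 1 ≤ H (rowIdx hr s) (j s)) ∧
        (∀ (s u : Fin r), u < s →
          0 ≤ H (rowIdx hr u) (j s) ∧ H (rowIdx hr u) (j s) < H (rowIdx hr s) (j s)) ∧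
        (∀ i : Fin m, i0 + r ≤ (i : ℕ) → ∀ l, H i l = 0) := by
  intro n
  induction n with
  | zero =>
    intro i0 hi0 E
    exact ⟨E, 0, by omega, Fin.elim0, Rel.refl i0 E, fun a => a.elim0, fun s => s.elim0,
      fun s => s.elim0, fun s => s.elim0, fun i _ l => l.elim0⟩
  | succ n ihn =>
    intro i0 hi0 E
    by_cases hcol : ∀ i : Fin m, i0 ≤ (i : ℕ) → E i 0 = 0
    · -- first column vanishes below i0
      set E' : Matrix (Fin m) (Fin n) ℤ := fun i l => E i l.succ with hE'
      obtain ⟨H', r, hr, j', ⟨U, hUdet, hUb, hUE⟩, hj', hzb', hpv', hc3', hzr'⟩ :=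
        ihn i0 hi0 E'
      set H : Matrix (Fin m) (Fin (n + 1)) ℤ := U * E with hH
      have htail : ∀ i l, H i l.succ = H' i l := by
        intro i l; rw [hH, mul_tail U E E' (fun _ _ => rfl), hUE]
      have hcol0 : ∀ i : Fin m, i0 ≤ (i : ℕ) → H i 0 = 0 := by
        intro i hi
        rw [hH, Matrix.mul_apply]
        apply Finset.sum_eq_zero
        intro k _
        rcases Nat.lt_or_ge (k : ℕ) i0 with hk | hk
        · rw [hUb i k (Or.inr hk), if_neg (by rintro rfl; omega), zero_mul]
        · rw [hcol k hk, mul_zero]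
      refine ⟨H, r, hr, fun s => (j' s).succ, ⟨U, hUdet, hUb, rfl⟩,
        fun a b hab => Fin.succ_lt_succ_iff.mpr (hj' hab), ?_, ?_, ?_, ?_⟩
      · intro s l hl
        rcases Fin.eq_zero_or_eq_succ l with rfl | ⟨l', rfl⟩
        · exact hcol0 _ (Nat.le_add_right i0 _)
        · rw [htail]; exact hzb' s l' (by rwa [Fin.succ_lt_succ_iff] at hl)
      · intro s; rw [htail]; exact hpv' s
      · intro s u hus
        rw [htail, htail]; exact hc3' s u hus
      · intro i hige l
        rcases Fin.eq_zero_or_eq_succ l with rfl | ⟨l', rfl⟩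
        · exact hcol0 i (by omega)
        · rw [htail]; exact hzr' i hige l'
    · -- some nonzero entry in the first column at a row ≥ i0
      push_neg at hcol
      obtain ⟨i, hi, hne⟩ := hcol
      have hi0m : i0 < m := lt_of_le_of_lt hi i.isLt
      obtain ⟨B, hrelEB, hBp, hBz⟩ := clear_col hi0m _ E le_rfl ⟨i, hi, hne⟩
      set B' : Matrix (Fin m) (Fin n) ℤ := fun i l => B i l.succ with hB'
      obtain ⟨H', r', hr', j', ⟨U, hUdet, hUb, hUB⟩, hj', hzb', hpv', hc3', hzr'⟩ :=
        ihn (i0 + 1) (by omega) B'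
      set H1 : Matrix (Fin m) (Fin (n + 1)) ℤ := U * B with hH1
      have hrelBH1 : Rel i0 B H1 := ⟨U, hUdet, fun a b hab => hUb a b (by omega), rfl⟩
      have htail : ∀ i l, H1 i l.succ = H' i l := by
        intro a l; rw [hH1, mul_tail U B B' (fun _ _ => rfl), hUB]
      have hfix : ∀ l, H1 ⟨i0, hi0m⟩ l = B ⟨i0, hi0m⟩ l := by
        have hR : Rel (i0 + 1) B H1 := ⟨U, hUdet, hUb, rfl⟩
        have h := hR.fixed_rows (i := (⟨i0, hi0m⟩ : Fin m)) (Nat.lt_succ_self i0)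
        intro l; rw [h]
      have hcol0 : ∀ i : Fin m, i0 < (i : ℕ) → H1 i 0 = 0 := by
        intro a ha
        rw [hH1, Matrix.mul_apply]
        apply Finset.sum_eq_zero
        intro k _
        rcases Nat.lt_or_ge (k : ℕ) (i0 + 1) with hk | hk
        · rw [hUb a k (Or.inr hk), if_neg (by rintro rfl; omega), zero_mul]
        · rw [hBz k (by omega), mul_zero]
      set row : Fin r' → Fin m := fun s => rowIdx hr' s with hrowdef
      have hrowgt : ∀ s, i0 < (row s : ℕ) := fun s => by
        show i0 < (i0 + 1) + (s : ℕ); omega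
      have hrowne : ∀ u, row u ≠ ⟨i0, hi0m⟩ := by
        intro u h
        have := hrowgt u
        rw [h] at this
        exact Nat.lt_irrefl i0 this
      set jS : Fin r' → Fin (n + 1) := fun s => (j' s).succ with hjS
      have hjSm : StrictMono jS := fun a b hab => Fin.succ_lt_succ_iff.mpr (hj' hab)
      have hzb1 : ∀ s l, l < jS s → H1 (row s) l = 0 := by
        intro s l hl
        rcases Fin.eq_zero_or_eq_succ l with rfl | ⟨l', rfl⟩
        · exact hcol0 _ (hrowgt s)
        · rw [htail]; exact hzb' s l' (by rwa [Fin.succ_lt_succ_iff] at hl)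
      have hpv1 : ∀ s, 1 ≤ H1 (row s) (jS s) := by
        intro s; rw [hjS]; rw [htail]; exact hpv' s
      obtain ⟨H2, hrel12, hoth, hcols, hbnd⟩ :=
        reduce_row hi0m row hrowgt jS hjSm H1 hzb1 hpv1 r' le_rfl
      have hrfull : i0 + (r' + 1) ≤ m := by omega
      have hrow0 : rowIdx hrfull (0 : Fin (r' + 1)) = ⟨i0, hi0m⟩ := by
        apply Fin.ext; show i0 + ((0 : Fin (r' + 1)) : ℕ) = i0; simp
      have hrowS : ∀ u : Fin r', rowIdx hrfull u.succ = row u := by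
        intro u; apply Fin.ext
        show i0 + ((u.succ : Fin (r' + 1)) : ℕ) = (i0 + 1) + (u : ℕ)
        simp [Fin.val_succ]; omega
      have hH2row : ∀ u : Fin r', ∀ l, H2 (row u) l = H1 (row u) l :=
        fun u l => hoth (row u) (hrowne u) l
      refine ⟨H2, r' + 1, hrfull, Fin.cases (0 : Fin (n + 1)) jS,
        (hrelEB.trans hrelBH1).trans hrel12, ?_, ?_, ?_, ?_, ?_⟩
      · -- strict mono
        intro a b hab
        rcases Fin.eq_zero_or_eq_succ b with rfl | ⟨b', rfl⟩
        · exact absurd hab (Fin.not_lt_zero a)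
        · rcases Fin.eq_zero_or_eq_succ a with rfl | ⟨a', rfl⟩
          · simp only [Fin.cases_zero, Fin.cases_succ]
            exact Fin.succ_pos (j' b')
          · simp only [Fin.cases_succ]
            exact Fin.succ_lt_succ_iff.mpr (hj' (by rwa [Fin.succ_lt_succ_iff] at hab))
      · -- zeros before pivots
        intro s l hl
        rcases Fin.eq_zero_or_eq_succ s with rfl | ⟨u, rfl⟩
        · simp only [Fin.cases_zero] at hl
          exact absurd hl (Fin.not_lt_zero l)
        · simp only [Fin.cases_succ] at hl
          rw [hrowS, hH2row]
          exact hzb1 u l hl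
      · -- pivots positive
        intro s
        rcases Fin.eq_zero_or_eq_succ s with rfl | ⟨u, rfl⟩
        · simp only [Fin.cases_zero]
          rw [hrow0, hcols 0 (fun s => Fin.succ_pos (j' s)), hfix]
          exact hBp
        · simp only [Fin.cases_succ]
          rw [hrowS, hH2row]
          exact hpv1 u
      · -- above-pivot bounds
        intro s u hus
        rcases Fin.eq_zero_or_eq_succ s with rfl | ⟨v, rfl⟩
        · exact absurd hus (Fin.not_lt_zero u)
        · simp only [Fin.cases_succ]
          rw [hrowS v, hH2row v]
          rcases Fin.eq_zero_or_eq_succ u with rfl | ⟨w, rfl⟩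
          · rw [hrow0]
            exact hbnd v v.isLt
          · rw [hrowS w, hH2row w]
            show 0 ≤ H1 (row w) ((j' v).succ) ∧
              H1 (row w) ((j' v).succ) < H1 (row v) ((j' v).succ)
            simp only [htail]
            exact hc3' v w (by rwa [Fin.succ_lt_succ_iff] at hus)
      · -- zero rows
        intro a hage l
        have hane : a ≠ ⟨i0, hi0m⟩ := by
          intro h
          have : (a : ℕ) = i0 := by rw [h]
          omega
        rw [hoth a hane]
        rcases Fin.eq_zero_or_eq_succ l with rfl | ⟨l', rfl⟩
        · exact hcol0 a (by omega)
        · rw [htail]; exact hzr' a (by omega) l'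

end HNFAux

namespace HNFAux
variable {m n : ℕ}

/-- the `ℤ`-span of the rows of a matrix -/
def rowSpan (A : Matrix (Fin m) (Fin n) ℤ) : Submodule ℤ (Fin n → ℤ) :=
  Submodule.span ℤ (Set.range A)

theorem rowSpan_le_of_mul (U : Matrix (Fin m) (Fin m) ℤ) (A : Matrix (Fin m) (Fin n) ℤ) :
    rowSpan (U * A) ≤ rowSpan A := by
  rw [rowSpan, Submodule.span_le]
  rintro x ⟨i, rfl⟩
  have hrow : (U * A) i = ∑ k, U i k • A k := by
    funext l
    rw [Matrix.mul_apply, Finset.sum_apply]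
    simp
  rw [hrow]
  exact Submodule.sum_mem _ fun k _ =>
    Submodule.smul_mem _ _ (Submodule.subset_span ⟨k, rfl⟩)

theorem rowSpan_eq_of_unimodular {U : Matrix (Fin m) (Fin m) ℤ}
    (hU : U.det = 1 ∨ U.det = -1) (A : Matrix (Fin m) (Fin n) ℤ) :
    rowSpan (U * A) = rowSpan A := by
  refine le_antisymm (rowSpan_le_of_mul U A) ?_
  have hdet : U.det * U.det = 1 := by rcases hU with h | h <;> rw [h] <;> ring
  have hVU : (U.det • U.adjugate) * U = 1 := by
    rw [Matrix.smul_mul, Matrix.adjugate_mul, smul_smul, hdet, one_smul]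
  have hA : A = (U.det • U.adjugate) * (U * A) := by
    rw [← Matrix.mul_assoc, hVU, Matrix.one_mul]
  nth_rewrite 1 [hA]
  exact rowSpan_le_of_mul _ _

/-- Every nonzero member of the row span of an HNF matrix has its first nonzero
coordinate at a pivot column, divisible by the pivot. -/
theorem key {r : ℕ} (hr : r ≤ m) (j : Fin r → Fin n) (hj : StrictMono j)
    (H : Matrix (Fin m) (Fin n) ℤ)
    (hzb : ∀ (s : Fin r) (l : Fin n), l < j s → H (Fin.castLE hr s) l = 0)
    (hpv : ∀ s, 1 ≤ H (Fin.castLE hr s) (j s))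
    (hzr : ∀ i : Fin m, r ≤ (i : ℕ) → ∀ l, H i l = 0)
    {v : Fin n → ℤ} (hv : v ∈ rowSpan H) (hvne : v ≠ 0) :
    ∃ s0 : Fin r, (∀ l, l < j s0 → v l = 0) ∧
      H (Fin.castLE hr s0) (j s0) ∣ v (j s0) ∧ v (j s0) ≠ 0 := by
  have hle : rowSpan H ≤ Submodule.span ℤ (Set.range fun s : Fin r => H (Fin.castLE hr s)) := by
    rw [rowSpan, Submodule.span_le]
    rintro x ⟨i, rfl⟩
    by_cases h : (i : ℕ) < r
    · exact Submodule.subset_span ⟨⟨(i : ℕ), h⟩, congrArg H (Fin.ext rfl)⟩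
    · have hz : H i = 0 := funext (hzr i (by omega))
      rw [hz]; exact Submodule.zero_mem _
  obtain ⟨c, hc⟩ := (Submodule.mem_span_range_iff_exists_fun ℤ).1 (hle hv)
  have hceval : ∀ l, v l = ∑ s, c s * H (Fin.castLE hr s) l := by
    intro l
    rw [← hc, Finset.sum_apply]
    simp
  have hcne : ∃ s, c s ≠ 0 := by
    by_contra hall
    push_neg at hall
    apply hvne
    funext l
    rw [hceval l]
    exact Finset.sum_eq_zero fun s _ => by rw [hall s, zero_mul]
  set T := Finset.univ.filter (fun s => c s ≠ 0) with hT
  have hTne : T.Nonempty :=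
    ⟨hcne.choose, Finset.mem_filter.mpr ⟨Finset.mem_univ _, hcne.choose_spec⟩⟩
  set s0 := T.min' hTne with hs0
  have hcs0 : c s0 ≠ 0 := (Finset.mem_filter.mp (T.min'_mem hTne)).2
  have hmin : ∀ s, s < s0 → c s = 0 := by
    intro s hs
    by_contra hcs
    exact absurd hs
      (not_lt.mpr (T.min'_le s (Finset.mem_filter.mpr ⟨Finset.mem_univ _, hcs⟩)))
  have hval : v (j s0) = c s0 * H (Fin.castLE hr s0) (j s0) := by
    rw [hceval, Finset.sum_eq_single s0]
    · intro s _ hsne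
      rcases lt_or_gt_of_ne hsne with h | h
      · rw [hmin s h, zero_mul]
      · rw [hzb s (j s0) (hj h), mul_zero]
    · simp
  refine ⟨s0, ?_, ?_, ?_⟩
  · intro l hl
    rw [hceval l]
    apply Finset.sum_eq_zero
    intro s _
    rcases lt_or_ge s s0 with h | h
    · rw [hmin s h, zero_mul]
    · rw [hzb s l (lt_of_lt_of_le hl (hj.monotone h)), mul_zero]
  · rw [hval]; exact dvd_mul_left _ _
  · rw [hval]
    exact mul_ne_zero hcs0 (by have := hpv s0; omega)

/-- If a member of the row span vanishes before pivot column `j s`,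
its value there is divisible by the pivot. -/
theorem pivot_dvd {r : ℕ} (hr : r ≤ m) (j : Fin r → Fin n) (hj : StrictMono j)
    (H : Matrix (Fin m) (Fin n) ℤ)
    (hzb : ∀ (s : Fin r) (l : Fin n), l < j s → H (Fin.castLE hr s) l = 0)
    (hpv : ∀ s, 1 ≤ H (Fin.castLE hr s) (j s))
    (hzr : ∀ i : Fin m, r ≤ (i : ℕ) → ∀ l, H i l = 0)
    {v : Fin n → ℤ} (hv : v ∈ rowSpan H) (s : Fin r)
    (hbefore : ∀ l, l < j s → v l = 0) :
    H (Fin.castLE hr s) (j s) ∣ v (j s) := by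
  by_cases hvz : v = 0
  · rw [hvz]; exact dvd_zero _
  obtain ⟨s0, hbef0, hdvd0, hne0⟩ := key hr j hj H hzb hpv hzr hv hvz
  rcases lt_trichotomy (j s0) (j s) with h | h | h
  · exact absurd (hbefore _ h) hne0
  · have : s0 = s := hj.injective h
    subst this
    exact hdvd0
  · rw [hbef0 (j s) h]
    exact dvd_zero _

end HNFAux

namespace HNFAux
variable {m n : ℕ}

theorem pivot_sub {H1 H2 : Matrix (Fin m) (Fin n) ℤ}
    {r1 : ℕ} (hr1 : r1 ≤ m) (j1 : Fin r1 → Fin n)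
    (hzb1 : ∀ (s : Fin r1) (l : Fin n), l < j1 s → H1 (Fin.castLE hr1 s) l = 0)
    (hpv1 : ∀ s, 1 ≤ H1 (Fin.castLE hr1 s) (j1 s))
    {r2 : ℕ} (hr2 : r2 ≤ m) (j2 : Fin r2 → Fin n) (hj2 : StrictMono j2)
    (hzb2 : ∀ (s : Fin r2) (l : Fin n), l < j2 s → H2 (Fin.castLE hr2 s) l = 0)
    (hpv2 : ∀ s, 1 ≤ H2 (Fin.castLE hr2 s) (j2 s))
    (hzr2 : ∀ i : Fin m, r2 ≤ (i : ℕ) → ∀ l, H2 i l = 0)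
    (hspan : rowSpan H1 = rowSpan H2) :
    Set.range j1 ⊆ Set.range j2 := by
  rintro l ⟨s1, rfl⟩
  have hv2 : H1 (Fin.castLE hr1 s1) ∈ rowSpan H2 :=
    hspan ▸ Submodule.subset_span ⟨_, rfl⟩
  have hvne : H1 (Fin.castLE hr1 s1) ≠ 0 := by
    intro h
    have h1 := hpv1 s1
    rw [h] at h1
    simp at h1
  obtain ⟨s0, hbef, _, hne0⟩ := key hr2 j2 hj2 H2 hzb2 hpv2 hzr2 hv2 hvne
  rcases lt_trichotomy (j2 s0) (j1 s1) with h | h | h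
  · exact absurd (hzb1 s1 _ h) hne0
  · exact ⟨s0, h⟩
  · have := hbef (j1 s1) h
    have h1 := hpv1 s1
    omega

theorem hnf_unique {H1 H2 : Matrix (Fin m) (Fin n) ℤ}
    {r1 : ℕ} (hr1 : r1 ≤ m) (j1 : Fin r1 → Fin n) (hj1 : StrictMono j1)
    (hzb1 : ∀ (s : Fin r1) (l : Fin n), l < j1 s → H1 (Fin.castLE hr1 s) l = 0)
    (hpv1 : ∀ s, 1 ≤ H1 (Fin.castLE hr1 s) (j1 s))
    (hc31 : ∀ (s u : Fin r1), u < s → 0 ≤ H1 (Fin.castLE hr1 u) (j1 s) ∧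
      H1 (Fin.castLE hr1 u) (j1 s) < H1 (Fin.castLE hr1 s) (j1 s))
    (hzr1 : ∀ i : Fin m, r1 ≤ (i : ℕ) → ∀ l, H1 i l = 0)
    {r2 : ℕ} (hr2 : r2 ≤ m) (j2 : Fin r2 → Fin n) (hj2 : StrictMono j2)
    (hzb2 : ∀ (s : Fin r2) (l : Fin n), l < j2 s → H2 (Fin.castLE hr2 s) l = 0)
    (hpv2 : ∀ s, 1 ≤ H2 (Fin.castLE hr2 s) (j2 s))
    (hc32 : ∀ (s u : Fin r2), u < s → 0 ≤ H2 (Fin.castLE hr2 u) (j2 s) ∧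
      H2 (Fin.castLE hr2 u) (j2 s) < H2 (Fin.castLE hr2 s) (j2 s))
    (hzr2 : ∀ i : Fin m, r2 ≤ (i : ℕ) → ∀ l, H2 i l = 0)
    (hspan : rowSpan H1 = rowSpan H2) :
    H1 = H2 := by
  have hrange : Set.range j1 = Set.range j2 :=
    Set.Subset.antisymm
      (pivot_sub hr1 j1 hzb1 hpv1 hr2 j2 hj2 hzb2 hpv2 hzr2 hspan)
      (pivot_sub hr2 j2 hzb2 hpv2 hr1 j1 hj1 hzb1 hpv1 hzr1 hspan.symm)
  have hSeq : Finset.univ.image j1 = Finset.univ.image j2 := by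
    apply Finset.coe_injective
    simp only [Finset.coe_image, Finset.coe_univ, Set.image_univ]
    exact hrange
  have hcard1 : (Finset.univ.image j1).card = r1 := by
    rw [Finset.card_image_of_injective _ hj1.injective, Finset.card_univ, Fintype.card_fin]
  have hcard2 : (Finset.univ.image j2).card = r2 := by
    rw [Finset.card_image_of_injective _ hj2.injective, Finset.card_univ, Fintype.card_fin]
  have hr12 : r1 = r2 := by rw [← hcard1, hSeq, hcard2]
  subst hr12
  have hjeq : j1 = j2 := by
    have e1 : j1 = (Finset.univ.image j1).orderEmbOfFin hcard1 :=
      Finset.orderEmbOfFin_unique hcard1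
        (fun x => Finset.mem_image_of_mem j1 (Finset.mem_univ x)) hj1
    have e2 : j2 = (Finset.univ.image j1).orderEmbOfFin hcard1 :=
      Finset.orderEmbOfFin_unique hcard1
        (fun x => by rw [hSeq]; exact Finset.mem_image_of_mem j2 (Finset.mem_univ x)) hj2
    rw [e1, e2]
  subst hjeq
  -- pivot values agree
  have hg : ∀ s, H1 (Fin.castLE hr1 s) (j1 s) = H2 (Fin.castLE hr2 s) (j1 s) := by
    intro s
    have d12 : H1 (Fin.castLE hr1 s) (j1 s) ∣ H2 (Fin.castLE hr2 s) (j1 s) :=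
      pivot_dvd hr1 j1 hj1 H1 hzb1 hpv1 hzr1
        (hspan.symm ▸ Submodule.subset_span ⟨_, rfl⟩) s (hzb2 s)
    have d21 : H2 (Fin.castLE hr2 s) (j1 s) ∣ H1 (Fin.castLE hr1 s) (j1 s) :=
      pivot_dvd hr2 j1 hj1 H2 hzb2 hpv2 hzr2
        (hspan ▸ Submodule.subset_span ⟨_, rfl⟩) s (hzb1 s)
    exact Int.dvd_antisymm (by have := hpv1 s; omega) (by have := hpv2 s; omega) d12 d21
  -- rows agree
  have hrows : ∀ s : Fin r1, H1 (Fin.castLE hr1 s) = H2 (Fin.castLE hr2 s) := by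
    intro i
    by_contra hne
    set v : Fin n → ℤ := H1 (Fin.castLE hr1 i) - H2 (Fin.castLE hr2 i) with hvdef
    have hvmem : v ∈ rowSpan H2 :=
      Submodule.sub_mem _ (hspan ▸ Submodule.subset_span ⟨_, rfl⟩)
        (Submodule.subset_span ⟨_, rfl⟩)
    have hvne : v ≠ 0 := sub_ne_zero.mpr hne
    obtain ⟨s0, hbef, hdvd, hne0⟩ := key hr2 j1 hj1 H2 hzb2 hpv2 hzr2 hvmem hvne
    have hvlow : ∀ l, l ≤ j1 i → v l = 0 := by
      intro l hl
      rcases lt_or_eq_of_le hl with h | h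
      · show H1 (Fin.castLE hr1 i) l - H2 (Fin.castLE hr2 i) l = 0
        rw [hzb1 i l h, hzb2 i l h, sub_zero]
      · subst h
        show H1 (Fin.castLE hr1 i) (j1 i) - H2 (Fin.castLE hr2 i) (j1 i) = 0
        rw [hg i, sub_self]
    have hlt : j1 i < j1 s0 := by
      by_contra hnlt
      exact absurd (hvlow (j1 s0) (not_lt.mp hnlt)) hne0
    have his0 : i < s0 := hj1.lt_iff_lt.mp hlt
    have hb1 := hc31 s0 i his0
    have hb2 := hc32 s0 i his0
    have hgv := hg s0
    have hvs0 : v (j1 s0) = H1 (Fin.castLE hr1 i) (j1 s0) - H2 (Fin.castLE hr2 i) (j1 s0) := rfl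
    have hvlt : |v (j1 s0)| < H2 (Fin.castLE hr2 s0) (j1 s0) := by
      rw [hvs0, abs_lt]
      constructor <;> omega
    have hge : H2 (Fin.castLE hr2 s0) (j1 s0) ≤ |v (j1 s0)| :=
      Int.le_of_dvd (abs_pos.mpr hne0) ((dvd_abs _ _).mpr hdvd)
    omega
  funext i l
  by_cases h : (i : ℕ) < r1
  · have hi : i = Fin.castLE hr1 ⟨(i : ℕ), h⟩ := Fin.ext rfl
    rw [hi, hrows]
  · rw [hzr1 i (by omega) l, hzr2 i (by omega) l]

end HNFAux

/-- for every `m × n` integer matrix `E` there is a unique `m × n` integer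
matrix `H` in Hermite normal form such that `U * E = H` for some `m × m` integer matrix `U`
with `det U = ±1`. -/
theorem hermite_normal_form_exists_unique {m n : ℕ} (E : Matrix (Fin m) (Fin n) ℤ) :
    ∃! H : Matrix (Fin m) (Fin n) ℤ, IsHNF H ∧
      ∃ U : Matrix (Fin m) (Fin m) ℤ, (U.det = 1 ∨ U.det = -1) ∧ U * E = H := by
  obtain ⟨H, r, hr, j, ⟨U, hUdet, _, hUE⟩, hj, hzb, hpv, hc3, hzr⟩ :=
    HNFAux.exists_hnf_from n 0 (Nat.zero_le m) E
  have hr' : r ≤ m := by omega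
  have hrowcast : ∀ s : Fin r, HNFAux.rowIdx hr s = Fin.castLE hr' s := fun s =>
    Fin.ext (by simp [HNFAux.rowIdx])
  have hzbC : ∀ (s : Fin r) (l : Fin n), l < j s → H (Fin.castLE hr' s) l = 0 := fun s l hl => by
    rw [← hrowcast]; exact hzb s l hl
  have hpvC : ∀ s : Fin r, 1 ≤ H (Fin.castLE hr' s) (j s) := fun s => by
    rw [← hrowcast]; exact hpv s
  have hc3C : ∀ (s u : Fin r), u < s → 0 ≤ H (Fin.castLE hr' u) (j s) ∧
      H (Fin.castLE hr' u) (j s) < H (Fin.castLE hr' s) (j s) := fun s u hu => by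
    rw [← hrowcast, ← hrowcast]; exact hc3 s u hu
  have hzrC : ∀ i : Fin m, r ≤ (i : ℕ) → ∀ l, H i l = 0 := fun i hi l => hzr i (by omega) l
  refine ⟨H, ⟨⟨r, hr', j, hj, hzbC, hpvC, hc3C, hzrC⟩, U, hUdet, hUE⟩, ?_⟩
  rintro H' ⟨⟨r'', hr'', j'', hj'', hzb'', hpv'', hc3'', hzr''⟩, U', hU'det, hU'E⟩
  have h1 : HNFAux.rowSpan H' = HNFAux.rowSpan E := by
    rw [← hU'E]; exact HNFAux.rowSpan_eq_of_unimodular hU'det E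
  have h2 : HNFAux.rowSpan H = HNFAux.rowSpan E := by
    rw [← hUE]; exact HNFAux.rowSpan_eq_of_unimodular hUdet E
  exact HNFAux.hnf_unique hr'' j'' hj'' hzb'' hpv'' hc3'' hzr''
    hr' j hj hzbC hpvC hc3C hzrC (h1.trans h2.symm)
end

section
/- Let E be an m × n matrix over ℤ, let H be the Hermite normal form of the transpose E^t, and let U be an n × n integer matrix with det(U) = ±1 and U E^t = H. If r is the rank of H, then the last n − r rows of U form a lattice basis of the nullspace lattice L(E) = { X ∈ ℤ^n : EX = 0 }; that is, these rows lie in L(E), are linearly independent over ℚ, and every element of L(E) is an integer linear combination of them. -/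
open Matrix

/-- if `H` is the Hermite normal form of `Eᵀ`, of rank `r`, and `U` is a
unimodular `n × n` integer matrix with `U * Eᵀ = H`, then the last `n - r` rows of `U`
form a lattice basis of the nullspace lattice `L(E) = { X ∈ ℤ^n : EX = 0 }`: they lie
in `L(E)`, they are linearly independent over `ℚ`, and every element of `L(E)` is an
integer linear combination of them. -/
theorem hermite_transform_rows_lattice_basis {m n : ℕ}
    (E : Matrix (Fin m) (Fin n) ℤ) (H : Matrix (Fin n) (Fin m) ℤ)
    (U : Matrix (Fin n) (Fin n) ℤ) (r : ℕ) (hrn : r ≤ n)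
    (hH : IsHNFOfRank r H) (hU : U.det = 1 ∨ U.det = -1) (hUE : U * Eᵀ = H) :
    (∀ k : Fin (n - r), E.mulVec (U ⟨r + (k : ℕ), by omega⟩) = 0) ∧
    LinearIndependent ℚ
      (fun k : Fin (n - r) => fun j : Fin n => ((U ⟨r + (k : ℕ), by omega⟩ j : ℤ) : ℚ)) ∧
    (∀ X : Fin n → ℤ, E.mulVec X = 0 →
      ∃ c : Fin (n - r) → ℤ,
        X = ∑ k : Fin (n - r), c k • U ⟨r + (k : ℕ), by omega⟩) := by
  obtain ⟨hr, j, hmono, h1, h2, h3, h4⟩ := hH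
  have hdet : IsUnit U.det := by
    rcases hU with h | h <;> simp [Int.isUnit_iff, h]
  -- part 1
  have part1 : ∀ k : Fin (n - r), E.mulVec (U ⟨r + (k : ℕ), by omega⟩) = 0 := by
    intro k
    funext l
    have := congrFun (congrFun hUE ⟨r + (k : ℕ), by omega⟩) l
    simp only [Matrix.mul_apply, Matrix.transpose_apply] at this
    have hz : H ⟨r + (k : ℕ), by omega⟩ l = 0 := h4 _ (by simp) l
    rw [hz] at this
    simpa [Matrix.mulVec, dotProduct, mul_comm] using this
  refine ⟨part1, ?_, ?_⟩
  · -- linear independence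
    have hU' : IsUnit (U.map (Int.cast : ℤ → ℚ)).det := by
      have hdq : (U.map (Int.cast : ℤ → ℚ)).det = ((U.det : ℤ) : ℚ) :=
        (RingHom.map_det (Int.castRingHom ℚ) U).symm
      rw [hdq]
      rcases hU with h | h <;> simp [h]
    have hli : LinearIndependent ℚ (fun i => (U.map (Int.cast : ℤ → ℚ)) i) :=
      Matrix.linearIndependent_rows_iff_isUnit.mpr
        ((Matrix.isUnit_iff_isUnit_det _).mpr hU')
    have hinj : Function.Injective
        (fun k : Fin (n - r) => (⟨r + (k : ℕ), by omega⟩ : Fin n)) := by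
      intro a b hab
      have : r + (a : ℕ) = r + (b : ℕ) := congrArg Fin.val hab
      exact Fin.ext (by omega)
    exact hli.comp _ hinj
  · -- spanning
    intro X hX
    have hinv : U⁻¹ * U = 1 := Matrix.nonsing_inv_mul U hdet
    set c : Fin n → ℤ := Matrix.vecMul X U⁻¹ with hc
    have hcU : Matrix.vecMul c U = X := by
      rw [hc, Matrix.vecMul_vecMul, hinv, Matrix.vecMul_one]
    have hcH : Matrix.vecMul c H = 0 := by
      rw [← hUE, ← Matrix.vecMul_vecMul, hcU, Matrix.vecMul_transpose, hX]
    -- c vanishes on the first r coordinates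
    have key : ∀ i : Fin r, c (Fin.castLE hr i) = 0 := by
      suffices main : ∀ N : ℕ, ∀ i : Fin r, (i : ℕ) < N → c (Fin.castLE hr i) = 0 by
        intro i; exact main ((i : ℕ) + 1) i (by omega)
      intro N
      induction N with
      | zero => intro i h; omega
      | succ N IH =>
        intro i hiN
        have hcol := congrFun hcH (j i)
        simp only [Matrix.vecMul, dotProduct, Pi.zero_apply] at hcol
        have hsingle : ∑ t : Fin n, c t * H t (j i)
            = c (Fin.castLE hr i) * H (Fin.castLE hr i) (j i) := by
          refine Finset.sum_eq_single_of_mem _ (Finset.mem_univ _) ?_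
          intro t _ hne
          by_cases htr : r ≤ (t : ℕ)
          · rw [h4 t htr, mul_zero]
          · push_neg at htr
            set s : Fin r := ⟨(t : ℕ), htr⟩ with hs
            have hts : t = Fin.castLE hr s := Fin.ext rfl
            rcases lt_trichotomy (s : ℕ) (i : ℕ) with hlt | heq | hgt
            · rw [hts, IH s (by omega), zero_mul]
            · exact absurd (hts.trans (congrArg _ (Fin.ext heq))) hne
            · have : j i < j s := hmono (by exact hgt)
              rw [hts, h1 s (j i) this, mul_zero]
        rw [hsingle] at hcol
        have hpiv : H (Fin.castLE hr i) (j i) ≠ 0 := by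
          have := h2 i; omega
        exact (mul_eq_zero.mp hcol).resolve_right hpiv
    -- express X via the last rows
    refine ⟨fun k => c ⟨r + (k : ℕ), by omega⟩, ?_⟩
    have hXsum : X = ∑ t : Fin n, c t • U t := by
      funext l
      rw [← hcU]
      simp [Matrix.vecMul, dotProduct, Finset.sum_apply]
    rw [hXsum]
    set F : ℕ → (Fin n → ℤ) := fun i =>
      if h : i < n then c ⟨i, h⟩ • U ⟨i, h⟩ else 0 with hF
    have hL : ∑ t : Fin n, c t • U t = ∑ i ∈ Finset.range n, F i := by
      rw [← Fin.sum_univ_eq_sum_range]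
      refine Finset.sum_congr rfl fun t _ => ?_
      simp [hF, t.isLt]
    have hR : ∑ k : Fin (n - r), c ⟨r + (k : ℕ), by omega⟩ • U ⟨r + (k : ℕ), by omega⟩
        = ∑ i ∈ Finset.range (n - r), F (r + i) := by
      rw [← Fin.sum_univ_eq_sum_range (fun i => F (r + i))]
      refine Finset.sum_congr rfl fun k _ => ?_
      have hk : r + (k : ℕ) < n := by omega
      simp [hF, hk]
    rw [hL, hR, ← Finset.sum_Ico_eq_sum_range]
    have hsplit : ∑ i ∈ Finset.range n, F i
        = ∑ i ∈ Finset.Ico 0 r, F i + ∑ i ∈ Finset.Ico r n, F i := by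
      rw [Finset.sum_Ico_consecutive _ (Nat.zero_le r) hrn, ← Finset.range_eq_Ico]
    have hzero : ∑ i ∈ Finset.Ico 0 r, F i = 0 := by
      refine Finset.sum_eq_zero fun i hi => ?_
      have hir : i < r := (Finset.mem_Ico.mp hi).2
      have hin : i < n := lt_of_lt_of_le hir hrn
      have hci : c ⟨i, hin⟩ = 0 := key ⟨i, hir⟩
      show F i = 0
      rw [hF]
      simp only []
      rw [dif_pos hin, hci, zero_smul]
    rw [hsplit, hzero, zero_add]
end
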